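/- Let F be a field of characteristic zero and let L be an n-dimensional filiform Lie algebra over F with n ≥ 4, equipped with a basis e_1, …, e_n satisfying [e_1, e_i] = e_{i+1} for all 2 ≤ i ≤ n−1. Then [e_i, e_{n−1}] = 0 for all i = 3, …, n. -/

import Mathlib

/-!
The Jacobi identity gives `[L^i, L^j] ⊆ L^{i+j+1}`, and `e_k = (ad e₁)^{k-2} e₂ ∈ L^{k-2}` for `k ≥ 2`.
Hence for `i ≥ 3` the bracket `[e_i, e_{n-1}]` lies in `L^{(i-2)+(n-3)+1} ⊆ L^{n-1}`, which is
zero since the filiform condition gives it dimension `n - (n-1) - 1 = 0`.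
-/

namespace LieModule

variable {R L M : Type*} [CommRing R] [LieRing L] [LieAlgebra R L]
  [AddCommGroup M] [Module R M] [LieRingModule L M]

theorem lie_mem_lowerCentralSeries_add [LieModule R L M] {x : L} {m : M} {i j : ℕ}
    (hx : x ∈ lowerCentralSeries R L L i) (hm : m ∈ lowerCentralSeries R L M j) :
    ⁅x, m⁆ ∈ lowerCentralSeries R L M (i + j + 1) := by
  induction i generalizing x j m with
  | zero =>
    rw [zero_add, lowerCentralSeries_succ]
    exact LieSubmodule.lie_mem_lie hx hm
  | succ i ih =>
    rw [lowerCentralSeries_succ, ← LieSubmodule.mem_toSubmodule,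
      LieSubmodule.lieIdeal_oper_eq_linear_span'] at hx
    induction hx using Submodule.span_induction with
    | mem _ hy =>
      obtain ⟨y, -, z, hz, rfl⟩ := hy
      rw [lie_lie]
      refine sub_mem ?_ ?_
      · rw [show i + 1 + j + 1 = (i + j + 1) + 1 by omega, lowerCentralSeries_succ]
        exact LieSubmodule.lie_mem_lie (LieSubmodule.mem_top y) (ih hz hm)
      · rw [show i + 1 + j + 1 = i + (j + 1) + 1 by omega]
        refine ih hz ?_
        rw [lowerCentralSeries_succ]
        exact LieSubmodule.lie_mem_lie (LieSubmodule.mem_top y) hm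
    | zero => simp
    | add _ _ _ _ hy hz => rw [add_lie]; exact add_mem hy hz
    | smul c _ _ hy => rw [smul_lie]; exact SMulMemClass.smul_mem c hy

theorem mem_lowerCentralSeries_of_lie_eq_succ {n s : ℕ} (e : Fin n → M) (x : L)
    (he : ∀ (k : ℕ) (hk : k + 1 < n), s ≤ k → ⁅x, e ⟨k, by omega⟩⁆ = e ⟨k + 1, hk⟩)
    (k : ℕ) (hsk : s ≤ k) (hk : k < n) : e ⟨k, hk⟩ ∈ lowerCentralSeries R L M (k - s) := by
  induction k, hsk using Nat.le_induction with
  | base => simp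
  | succ k hsk ih =>
    rw [← he k hk hsk, show k + 1 - s = k - s + 1 by omega, lowerCentralSeries_succ]
    exact LieSubmodule.lie_mem_lie (LieSubmodule.mem_top x) (ih (by omega))

end LieModule

open LieModule in
theorem filiform_bracket_with_second_last_basis_vector
    (F : Type*) [Field F]
    (L : Type*) [LieRing L] [LieAlgebra F L]
    (n : ℕ)
    (hfil : ∀ k : ℕ, 1 ≤ k → k ≤ n - 1 →
      Module.finrank F ↥(LieModule.lowerCentralSeries F L L k) = n - k - 1)
    (b : Module.Basis (Fin n) F L)
    (hb : ∀ i : ℕ, ∀ h1 : 1 ≤ i, ∀ h2 : i ≤ n - 2,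
      ⁅b ⟨0, by omega⟩, b ⟨i, by omega⟩⁆ = b ⟨i + 1, by omega⟩) :
    ∀ i : ℕ, ∀ h1 : 3 ≤ i, ∀ h2 : i ≤ n, ⁅b ⟨i - 1, by omega⟩, b ⟨n - 2, by omega⟩⁆ = 0 := by
  intro i h1 h2
  have : FiniteDimensional F L := b.finiteDimensional_of_finite
  have hchain := mem_lowerCentralSeries_of_lie_eq_succ (R := F) b (b ⟨0, by omega⟩)
    (fun k hk hs => hb k hs (by omega))
  have hbot : lowerCentralSeries F L L (n - 1) = ⊥ :=
    (LieSubmodule.toSubmodule_eq_bot _).mp <| Submodule.finrank_eq_zero.mp <|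
      (hfil (n - 1) (by omega) le_rfl).trans (by omega)
  have hbracket := lie_mem_lowerCentralSeries_add
    (hchain (i - 1) (by omega) (by omega)) (hchain (n - 2) (by omega) (by omega))
  rw [← LieSubmodule.mem_bot (R := F) (L := L), ← hbot]
  exact antitone_lowerCentralSeries F L L (by omega) hbracket
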